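/- arXiv:2510.18529 — 5 statements merged into one kernel-verified Lean document; each statement's English description precedes it below -/
import Mathlib

section
/- Let n ≥ 4 be a composite integer (i.e., n is not prime) and let π ∈ S(ℤ_n) be a permutation that admits a permutation polynomial, i.e., there exists a polynomial f ∈ ℤ_n[x] with π(a) = f(a) for all a ∈ ℤ_n. Then t([π]) ≤ n − 3. -/
/-!
Shifting `π` by `k = π⁻¹ 0` gives a permutation `σ = π ∘ (· + k)` in the coset of `π` that fixes `0`
and is still given by a polynomial. Let `d` be a proper divisor of `n`. A polynomial map preserves
congruences modulo `d`, so `σ` maps the multiples of `d` to multiples of `d`. Hence `0`, `d` and `1`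
lie in three different cycles of `σ`: `0` is fixed, and the cycle of `d` consists of multiples of `d`.
So `σ` has at least three cycles and `t([π]) ≤ t(σ) ≤ n - 3`.
-/

/-- `cyc σ` is the number of cycles in the cycle decomposition of the permutation `σ`,
counting fixed points as cycles; i.e., the number of orbits of `σ`. -/
noncomputable def cyc {α : Type*} (σ : Equiv.Perm α) : ℕ :=
  Nat.card (Quotient (Setoid.mk σ.SameCycle
    ⟨fun x => Equiv.Perm.SameCycle.refl σ x, fun h => h.symm, fun h h' => h.trans h'⟩))

/-- `t(π) = n - cyc(π)`, the minimum number of transpositions whose product is `π`. -/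
noncomputable def tPerm {n : ℕ} (π : Equiv.Perm (ZMod n)) : ℕ := n - cyc π

/-- `t([π])`, the minimum of `t(π ∘ c^k)` over `k ∈ ℤ_n`, where `c : x ↦ x + 1`. -/
noncomputable def tCoset {n : ℕ} (π : Equiv.Perm (ZMod n)) : ℕ :=
  sInf { m : ℕ | ∃ k : ZMod n, m = tPerm (π * Equiv.addRight k) }

/-- The circular sorting number `t(n)`, the maximum of `t([π])` over `π ∈ S(ℤ_n)`. -/
noncomputable def tCirc (n : ℕ) : ℕ :=
  sSup { m : ℕ | ∃ π : Equiv.Perm (ZMod n), m = tCoset π }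

open Polynomial

theorem Polynomial.map_eval_eq_of_map_eq {R S : Type*} [Semiring R] [Semiring S] (φ : R →+* S)
    (f : R[X]) {a b : R} (h : φ a = φ b) : φ (f.eval a) = φ (f.eval b) := by
  rw [← eval_map_apply, ← eval_map_apply, h]

theorem Equiv.Perm.SameCycle.mem_of_mapsTo {α : Type*} [Finite α] {σ : Equiv.Perm α}
    {s : Set α} (hs : Set.MapsTo σ s s) {x y : α} (hxy : σ.SameCycle x y) (hx : x ∈ s) : y ∈ s := by
  obtain ⟨i, rfl⟩ := hxy.exists_nat_pow_eq
  exact hs.perm_pow i hx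

theorem three_le_cyc {α : Type*} [Finite α] (σ : Equiv.Perm α) {x y z : α}
    (hxy : ¬ σ.SameCycle x y) (hxz : ¬ σ.SameCycle x z) (hyz : ¬ σ.SameCycle y z) :
    3 ≤ cyc σ := by
  let s : Setoid α := Setoid.mk σ.SameCycle
    ⟨fun x => Equiv.Perm.SameCycle.refl σ x, fun h => h.symm, fun h h' => h.trans h'⟩
  have hthree : ({⟦x⟧, ⟦y⟧, ⟦z⟧} : Set (Quotient s)).ncard = 3 :=
    Set.ncard_eq_three.mpr ⟨_, _, _, fun h => hxy (Quotient.exact h),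
      fun h => hxz (Quotient.exact h), fun h => hyz (Quotient.exact h), rfl⟩
  exact hthree ▸ Set.ncard_le_card _

theorem tCoset_le_tPerm {n : ℕ} (π : Equiv.Perm (ZMod n)) (k : ZMod n) :
    tCoset π ≤ tPerm (π * Equiv.addRight k) :=
  Nat.sInf_le ⟨k, rfl⟩

theorem three_le_cyc_of_eval_eq {n d : ℕ} [NeZero n] (hdn : d ∣ n) (hd : 2 ≤ d) (hdlt : d < n)
    (σ : Equiv.Perm (ZMod n)) (f : (ZMod n)[X]) (hf : ∀ a, σ a = f.eval a) (hσ : σ 0 = 0) :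
    3 ≤ cyc σ := by
  let φ := ZMod.castHom hdn (ZMod d)
  have hφd : φ d = 0 := by simp [φ]
  have hφ1 : φ 1 ≠ 0 := by
    have : Fact (1 < d) := ⟨hd⟩
    simp
  have hfix : Set.MapsTo σ {0} {0} := by simpa using hσ
  have hker : Set.MapsTo σ {a | φ a = 0} {a | φ a = 0} := by
    intro a (ha : φ a = 0)
    change φ (σ a) = 0
    rw [hf, f.map_eval_eq_of_map_eq φ (ha.trans φ.map_zero.symm), ← hf, hσ, map_zero]
  have hd0 : (d : ZMod n) ≠ 0 := by
    rw [Ne, ZMod.natCast_eq_zero_iff]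
    exact fun h => absurd (Nat.le_of_dvd (by omega) h) (by omega)
  exact three_le_cyc σ (x := 0) (y := d) (z := 1)
    (fun h => hd0 (h.mem_of_mapsTo hfix rfl))
    (fun h => hφ1 (h.mem_of_mapsTo hker φ.map_zero))
    (fun h => hφ1 (h.mem_of_mapsTo hker hφd))

theorem tCoset_le_of_permPoly (n : ℕ) (hn : 4 ≤ n) (hcomp : ¬ n.Prime)
    (π : Equiv.Perm (ZMod n)) (hpoly : ∃ f : Polynomial (ZMod n), ∀ a : ZMod n, π a = f.eval a) :
    tCoset π ≤ n - 3 := by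
  have : NeZero n := ⟨by omega⟩
  obtain ⟨f, hf⟩ := hpoly
  obtain ⟨d, hdn, hd, hdlt⟩ := Nat.exists_dvd_of_not_prime2 (by omega) hcomp
  let k := π.symm 0
  have hσ : ∀ a, (π * Equiv.addRight k) a = (f.comp (X + C k)).eval a := by
    simp [hf]
  have hσ0 : (π * Equiv.addRight k) 0 = 0 := by simp [k]
  calc tCoset π ≤ tPerm (π * Equiv.addRight k) := tCoset_le_tPerm π k
    _ ≤ n - 3 := Nat.sub_le_sub_left (three_le_cyc_of_eval_eq hdn hd hdlt _ _ hσ hσ0) n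
end

section
/- Let n ≥ 3 be an integer and let π ∈ S(ℤ_n). Then t([π]) = n − 2 if and only if for every k ∈ ℤ_n the cyclic shift π ∘ c^k has cycle type (1, n−1), i.e., exactly one fixed point and one cycle of length n − 1. -/
open Equiv Finset

section Cycles

variable {α : Type*} (σ : Perm α)

theorem cyc_le_card [Finite α] : cyc σ ≤ Nat.card α :=
  Nat.card_le_card_of_surjective _ Quotient.mk_surjective

theorem card_le_cyc [Finite α] {s : Finset α}
    (hs : (s : Set α).Pairwise fun a b => ¬ σ.SameCycle a b) : #s ≤ cyc σ := by
  rw [← Nat.card_eq_finsetCard]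
  refine Nat.card_le_card_of_injective (fun a : s => Quotient.mk _ a.1) fun a b hab => ?_
  by_contra hne
  exact hs a.2 b.2 (Subtype.coe_ne_coe.mpr hne) (Quotient.exact hab)

theorem card_lt_cyc_of_forall_apply_eq_self [Finite α] [DecidableEq α] {s : Finset α}
    (hs : ∀ a ∈ s, σ a = a) {c : α} (hc : c ∉ s) : #s < cyc σ := by
  have hfix : (↑(insert c s) : Set α).Pairwise fun a b => ¬ σ.SameCycle a b := by
    intro a ha b hb hab h
    rw [coe_insert, Set.mem_insert_iff] at ha hb
    rcases ha with rfl | ha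
    · rcases hb with rfl | hb
      · exact hab rfl
      · exact hab (h.eq_of_right (hs b hb))
    · exact hab (h.eq_of_left (hs a ha))
  simpa [card_insert_of_notMem hc] using card_le_cyc σ hfix

theorem two_le_cyc_of_apply_eq_self [Finite α] [Nontrivial α] {a : α} (ha : σ a = a) :
    2 ≤ cyc σ := by
  classical
  obtain ⟨b, hb⟩ := exists_ne a
  have := card_lt_cyc_of_forall_apply_eq_self σ (s := {a}) (by simpa) (by simpa)
  rwa [card_singleton] at this

theorem card_fixedPoints_le_one_of_cyc_le_two [Fintype α] [DecidableEq α]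
    (hα : 2 < Fintype.card α) (hσ : cyc σ ≤ 2) : #{x | σ x = x} ≤ 1 := by
  by_contra! h
  obtain ⟨s, hsF, hs⟩ := exists_subset_card_eq (s := {x | σ x = x}) h
  obtain ⟨c, -, hc⟩ := exists_mem_notMem_of_card_lt_card (s := s) (t := univ)
    (by rwa [hs, card_univ])
  have := card_lt_cyc_of_forall_apply_eq_self σ (fun a ha => (mem_filter.mp (hsF ha)).2) hc
  omega

end Cycles

section Shifts

variable {G : Type*} [AddGroup G] [Fintype G] [DecidableEq G] (π : Perm G)

theorem sum_card_fixedPoints_mul_addRight :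
    ∑ k : G, #{x | (π * Equiv.addRight k) x = x} = Fintype.card G := by
  rw [← card_univ, card_eq_sum_card_fiberwise (f := fun x => -x + π⁻¹ x) (t := univ)
    (fun _ _ => mem_coe.mpr (mem_univ _))]
  refine sum_congr rfl fun k _ => congrArg card (filter_congr fun x _ => ?_)
  rw [Perm.mul_apply, Equiv.coe_addRight, ← Perm.eq_inv_iff_eq, neg_add_eq_iff_eq_add, eq_comm]

theorem card_fixedPoints_mul_addRight_eq_one
    (h : ∀ k : G, #{x | (π * Equiv.addRight k) x = x} ≤ 1) (k : G) :
    #{x | (π * Equiv.addRight k) x = x} = 1 := by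
  have hsum : ∑ k : G, #{x | (π * Equiv.addRight k) x = x} = ∑ _k : G, 1 := by
    rw [sum_card_fixedPoints_mul_addRight, sum_const, smul_eq_mul, mul_one, card_univ]
  exact (sum_eq_sum_iff_of_le fun k _ => h k).mp hsum k (mem_univ k)

end Shifts

theorem tCoset_eq_iff {n : ℕ} (π : Perm (ZMod n)) (m : ℕ) :
    tCoset π = m ↔
      (∀ k, m ≤ tPerm (π * Equiv.addRight k)) ∧ ∃ k, tPerm (π * Equiv.addRight k) = m := by
  constructor
  · rintro rfl
    refine ⟨fun k => Nat.sInf_le ⟨k, rfl⟩, ?_⟩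
    obtain ⟨k, hk⟩ := Nat.sInf_mem (s := {m | ∃ k, m = tPerm (π * Equiv.addRight k)}) ⟨_, 0, rfl⟩
    exact ⟨k, hk.symm⟩
  · rintro ⟨hle, k, hk⟩
    exact IsLeast.csInf_eq ⟨⟨k, hk.symm⟩, by rintro _ ⟨j, rfl⟩; exact hle j⟩

theorem tCoset_eq_sub_two_iff (n : ℕ) (hn : 3 ≤ n) (π : Equiv.Perm (ZMod n)) :
    tCoset π = n - 2 ↔
      ∀ k : ZMod n,
        (∃! x : ZMod n, π (x + k) = x) ∧ cyc (π * Equiv.addRight k) = 2 := by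
  have : NeZero n := ⟨by omega⟩
  have hcard : Fintype.card (ZMod n) = n := ZMod.card n
  have hle : ∀ k : ZMod n, cyc (π * Equiv.addRight k) ≤ n := fun k =>
    (cyc_le_card _).trans_eq (Nat.card_zmod n)
  simp only [tCoset_eq_iff, tPerm]
  constructor
  · rintro ⟨hmin, -⟩
    have hcyc : ∀ k : ZMod n, cyc (π * Equiv.addRight k) ≤ 2 := fun k => by
      have := hmin k; have := hle k; omega
    have hfix := card_fixedPoints_mul_addRight_eq_one π fun k =>
      card_fixedPoints_le_one_of_cyc_le_two _ (by omega) (hcyc k)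
    intro k
    have hfixk : ∃! x, π (x + k) = x := (Fintype.existsUnique_iff_card_one _).mpr (hfix k)
    obtain ⟨a, ha⟩ := hfixk.exists
    have : Nontrivial (ZMod n) := ZMod.nontrivial_iff.mpr (by omega)
    exact ⟨hfixk, (hcyc k).antisymm (two_le_cyc_of_apply_eq_self _ ha)⟩
  · intro h
    refine ⟨fun k => ?_, 0, ?_⟩
    · rw [(h k).2]
    · rw [(h 0).2]
end

section
/- Let n be a positive integer. There exists a strong complete mapping π ∈ S(ℤ_n) (i.e., a permutation π of ℤ_n such that both x ↦ π(x) − x and x ↦ π(x) + x are permutations of ℤ_n) if and only if gcd(n, 6) = 1. -/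
/-!
Summing `π x + x` over a finite abelian group shows `∑ x = 0`, and summing
`(π x - x) ^ 2 + (π x + x) ^ 2 = 2 π x ^ 2 + 2 x ^ 2` shows `2 ∑ x ^ 2 = 0`.
In `ℤ_n` these sums are `n (n - 1) / 2` and `(n - 1) n (2n - 1) / 3`, which vanish modulo `n`
only if `2 ∤ n` and `3 ∤ n`. Conversely, if `2` and `3` are units then `x ↦ 2x` is a strong
complete mapping, since `2x - x = x` and `2x + x = 3x`.
-/

open Finset Function

theorem sum_eq_zero_of_bijective_add_self {G : Type*} [AddCommGroup G] [Fintype G]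
    (π : Equiv.Perm G) (hadd : Bijective fun x => π x + x) : ∑ x : G, x = 0 := by
  have hπ : ∑ x, π x = ∑ x, x := Equiv.sum_comp π id
  have h : ∑ x, (π x + x) = ∑ x, x := hadd.sum_comp id
  rw [sum_add_distrib, hπ] at h
  exact add_eq_right.mp h

theorem two_mul_sum_sq_eq_zero_of_bijective {R : Type*} [CommRing R] [Fintype R]
    (π : Equiv.Perm R) (hsub : Bijective fun x => π x - x) (hadd : Bijective fun x => π x + x) :
    2 * ∑ x : R, x ^ 2 = 0 := by
  have hπ : ∑ x, π x ^ 2 = ∑ x, x ^ 2 := Equiv.sum_comp π fun y : R => y ^ 2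
  have hsub' : ∑ x, (π x - x) ^ 2 = ∑ x, x ^ 2 := hsub.sum_comp fun y : R => y ^ 2
  have hadd' : ∑ x, (π x + x) ^ 2 = ∑ x, x ^ 2 := hadd.sum_comp fun y : R => y ^ 2
  have parallelogram :
      ∑ x, ((π x - x) ^ 2 + (π x + x) ^ 2) = 2 * ∑ x, π x ^ 2 + 2 * ∑ x, x ^ 2 := by
    rw [mul_sum, mul_sum, ← sum_add_distrib]
    exact sum_congr rfl fun x _ => by ring
  rw [sum_add_distrib, hsub', hadd', hπ] at parallelogram
  linear_combination -parallelogram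

theorem exists_perm_bijective_sub_self_and_add_self {R : Type*} [Ring R]
    (h2 : IsUnit (2 : R)) (h3 : IsUnit (3 : R)) :
    ∃ π : Equiv.Perm R, Bijective (fun x => π x - x) ∧ Bijective (fun x => π x + x) := by
  refine ⟨h2.unit.mulLeft, ?_, ?_⟩
  · convert bijective_id using 1
    ext x
    simp [two_mul]
  · convert h3.unit.mulLeft.bijective using 1
    ext x
    simp only [Units.mulLeft_apply, IsUnit.unit_spec]
    noncomm_ring

theorem ZMod.sum_univ_eq_sum_range {n : ℕ} [NeZero n] {M : Type*} [AddCommMonoid M]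
    (f : ZMod n → M) : ∑ x, f x = ∑ i ∈ range n, f i :=
  sum_nbij' ZMod.val (↑) (fun x _ => mem_range.mpr x.val_lt) (fun _ _ => mem_univ _)
    (fun x _ => ZMod.natCast_zmod_val x) (fun _ hi => ZMod.val_cast_of_lt (mem_range.mp hi))
    (fun x _ => by rw [ZMod.natCast_zmod_val])

theorem Nat.six_mul_sum_range_succ_sq (n : ℕ) :
    6 * ∑ i ∈ range (n + 1), i ^ 2 = n * (n + 1) * (2 * n + 1) := by
  induction n with
  | zero => simp
  | succ m ih =>
    rw [sum_range_succ, Nat.mul_add, ih]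
    ring

theorem Nat.not_two_dvd_of_dvd_sum_range_id {n : ℕ} (hn : 0 < n)
    (h : n ∣ ∑ i ∈ range n, i) : ¬ 2 ∣ n := by
  intro h2
  have : n * 2 ∣ n * (n - 1) := sum_range_id_mul_two n ▸ Nat.mul_dvd_mul_right h 2
  have := (Nat.mul_dvd_mul_iff_left hn).mp this
  omega

theorem Nat.not_three_dvd_of_dvd_two_mul_sum_range_sq {n : ℕ} (hn : 0 < n)
    (h : n ∣ 2 * ∑ i ∈ range n, i ^ 2) : ¬ 3 ∣ n := by
  obtain ⟨m, rfl⟩ : ∃ m, n = m + 1 := ⟨n - 1, by omega⟩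
  intro h3
  have : (m + 1) * 3 ∣ (m + 1) * (m * (2 * m + 1)) :=
    calc (m + 1) * 3 ∣ 2 * (∑ i ∈ range (m + 1), i ^ 2) * 3 := Nat.mul_dvd_mul_right h 3
      _ = m * (m + 1) * (2 * m + 1) := by rw [← six_mul_sum_range_succ_sq]; ring
      _ = (m + 1) * (m * (2 * m + 1)) := by ring
  rcases (Nat.prime_three.dvd_mul).mp ((Nat.mul_dvd_mul_iff_left hn).mp this) with h | h <;>
    omega

theorem Nat.coprime_six_iff (n : ℕ) : n.Coprime 6 ↔ ¬ 2 ∣ n ∧ ¬ 3 ∣ n := by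
  rw [show 6 = 2 * 3 from rfl, Nat.coprime_mul_iff_right, Nat.coprime_comm,
    Nat.prime_two.coprime_iff_not_dvd, Nat.coprime_comm, Nat.prime_three.coprime_iff_not_dvd]

theorem exists_strongCompleteMapping_iff (n : ℕ) (hn : 0 < n) :
    (∃ π : Equiv.Perm (ZMod n),
        Function.Bijective (fun x : ZMod n => π x - x) ∧
        Function.Bijective (fun x : ZMod n => π x + x)) ↔ Nat.gcd n 6 = 1 := by
  have : NeZero n := ⟨hn.ne'⟩
  rw [← Nat.Coprime, Nat.coprime_six_iff]
  constructor
  · rintro ⟨π, hsub, hadd⟩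
    have hsum := sum_eq_zero_of_bijective_add_self π hadd
    have hsq := two_mul_sum_sq_eq_zero_of_bijective π hsub hadd
    rw [ZMod.sum_univ_eq_sum_range] at hsum hsq
    refine ⟨Nat.not_two_dvd_of_dvd_sum_range_id hn ?_,
      Nat.not_three_dvd_of_dvd_two_mul_sum_range_sq hn ?_⟩
    · exact (ZMod.natCast_eq_zero_iff _ _).mp (by push_cast; exact hsum)
    · exact (ZMod.natCast_eq_zero_iff _ _).mp (by push_cast; exact hsq)
  · rintro ⟨h2, h3⟩
    exact exists_perm_bijective_sub_self_and_add_self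
      (by exact_mod_cast (ZMod.isUnit_prime_iff_not_dvd Nat.prime_two).mpr h2)
      (by exact_mod_cast (ZMod.isUnit_prime_iff_not_dvd Nat.prime_three).mpr h3)
end

section
/- Let a and n be coprime positive integers and let π ∈ S(ℤ_n) be the permutation π(x) = a·x. Then t([π]) = n − Σ_{d | n} φ(d)/ord_d(a), where the sum ranges over positive divisors d of n, φ is Euler's totient function, and ord_d(a) is the multiplicative order of a modulo d (with ord_1(a) = 1). -/
/-!
Burnside's lemma for the cyclic group generated by a permutation `σ` with `σ ^ N = 1` gives
`cyc σ * N = ∑_{j < N} |Fix σ^j|`. For `π x = a * x` on `ℤ_n`, `a^j x = x` iff `ord_d(a) ∣ j`,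
where `d` is the additive order of `x`, and `ℤ_n` has `φ(d)` elements of order `d` for each `d ∣ n`;
summing over `j` gives `cyc π = ∑_{d ∣ n} φ(d) / ord_d(a)`.

Every `π ∘ c^k` is affine with linear part `π`, so the fixed points of its powers are either empty
or a translate of those of the powers of `π`. By Burnside it has at most as many cycles as `π`,
hence the minimum defining `t([π])` is attained at `k = 0`.
-/

open Finset Equiv MulAction

lemma ZMod.sum_val_eq_sum_range {M : Type*} [AddCommMonoid M] (N : ℕ) [NeZero N] (f : ℕ → M) :
    ∑ g : ZMod N, f g.val = ∑ j ∈ range N, f j :=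
  Finset.sum_nbij' ZMod.val Nat.cast (by simp [ZMod.val_lt]) (by simp)
    (by simp) (fun j hj => ZMod.val_cast_of_lt (mem_range.1 hj)) (by simp)

def Equiv.Perm.zmodPowHom {α : Type*} (σ : Perm α) {N : ℕ} [NeZero N] (h : σ ^ N = 1) :
    Multiplicative (ZMod N) →* Perm α where
  toFun g := σ ^ g.toAdd.val
  map_one' := by simp
  map_mul' g g' := by
    simp only [toAdd_mul, ZMod.val_add, ← pow_eq_pow_mod _ h, pow_add]

lemma cyc_mul_eq_sum_card_fixedPoints_pow {α : Type*} [Fintype α] [DecidableEq α] {σ : Perm α}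
    {N : ℕ} [NeZero N] (h : σ ^ N = 1) :
    cyc σ * N = ∑ j ∈ range N, #{x | (σ ^ j) x = x} := by
  classical
  let _ := MulAction.compHom α (σ.zmodPowHom h)
  have hsmul (g : Multiplicative (ZMod N)) (x : α) : g • x = (σ ^ g.toAdd.val) x := rfl
  have horbit (x y : α) : σ.SameCycle x y ↔ (orbitRel (Multiplicative (ZMod N)) α) x y := by
    rw [Equiv.Perm.sameCycle_comm]
    refine ⟨fun hyx => ?_, fun ⟨g, hg⟩ => ⟨g.toAdd.val, hg⟩⟩
    obtain ⟨i, -, hi⟩ := hyx.exists_pow_eq'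
    refine ⟨.ofAdd (i : ZMod N), ?_⟩
    change _ • _ = _
    rw [hsmul, toAdd_ofAdd, ZMod.val_natCast, ← pow_eq_pow_mod _ h, hi]
  have hcyc : cyc σ = Fintype.card (orbitRel.Quotient (Multiplicative (ZMod N)) α) := by
    rw [cyc, ← Nat.card_eq_fintype_card]
    exact Nat.card_congr (Quotient.congrRight horbit)
  calc cyc σ * N
      = Fintype.card (orbitRel.Quotient _ α) * Fintype.card (Multiplicative (ZMod N)) := by
        rw [hcyc, Fintype.card_multiplicative, ZMod.card]
    _ = ∑ g : ZMod N, #{x | (σ ^ g.val) x = x} := by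
        rw [← sum_card_fixedBy_eq_card_orbits_mul_card_group]
        refine Fintype.sum_equiv Multiplicative.toAdd _ _ fun g => ?_
        rw [← Fintype.card_subtype]
        rfl
    _ = _ := ZMod.sum_val_eq_sum_range N fun j => #{x | (σ ^ j) x = x}

section AffineComparison

variable {G : Type*} [AddGroup G]

lemma pow_apply_sub_pow_apply {τ π : Perm G} (h : ∀ x y, τ x - τ y = π (x - y)) (j : ℕ)
    (x y : G) : (τ ^ j) x - (τ ^ j) y = (π ^ j) (x - y) := by
  induction j generalizing x y with
  | zero => rfl
  | succ j ih => simp only [pow_succ, Perm.mul_apply, ih, h]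

variable [Fintype G] [DecidableEq G]

lemma card_fixedPoints_le_of_sub_eq {f g : G → G} (h : ∀ x y, f x - f y = g (x - y)) :
    #{x | f x = x} ≤ #{x | g x = x} := by
  obtain hempty | ⟨x₀, hx₀⟩ := ({x | f x = x} : Finset G).eq_empty_or_nonempty
  · simp [hempty]
  refine card_le_card_of_injOn (· - x₀) (fun x hx => ?_) fun x _ y _ => sub_left_inj.1
  simp only [coe_filter, mem_filter, mem_univ, true_and, Set.mem_ofPred_eq] at hx hx₀ ⊢
  rw [← h, hx, hx₀]

lemma cyc_le_of_sub_eq {τ π : Perm G} (h : ∀ x y, τ x - τ y = π (x - y)) : cyc τ ≤ cyc π := by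
  have : NeZero (Fintype.card (Perm G)) := ⟨Fintype.card_ne_zero⟩
  refine Nat.le_of_mul_le_mul_right ?_ (Fintype.card_pos (α := Perm G))
  rw [cyc_mul_eq_sum_card_fixedPoints_pow pow_card_eq_one,
    cyc_mul_eq_sum_card_fixedPoints_pow pow_card_eq_one]
  exact sum_le_sum fun j _ => card_fixedPoints_le_of_sub_eq (pow_apply_sub_pow_apply h j)

end AffineComparison

lemma natCast_pow_mul_eq_self_iff {R : Type*} [Ring R] (a j : ℕ) (x : R) :
    (a : R) ^ j * x = x ↔ orderOf (a : ZMod (addOrderOf x)) ∣ j := by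
  calc (a : R) ^ j * x = x ↔ (a ^ j) • x = 1 • x := by rw [nsmul_eq_mul, one_nsmul, Nat.cast_pow]
    _ ↔ a ^ j ≡ 1 [MOD addOrderOf x] := nsmul_eq_nsmul_iff_modEq
    _ ↔ ((a ^ j : ℕ) : ZMod (addOrderOf x)) = (1 : ℕ) := (ZMod.natCast_eq_natCast_iff ..).symm
    _ ↔ _ := by rw [orderOf_dvd_iff_pow_eq_one, Nat.cast_pow, Nat.cast_one]

lemma IsAddCyclic.card_filter_addOrderOf {G : Type*} [AddGroup G] [IsAddCyclic G] [Fintype G]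
    (P : ℕ → Prop) [DecidablePred P] :
    #{x : G | P (addOrderOf x)} =
      ∑ d ∈ (Fintype.card G).divisors, if P d then d.totient else 0 := by
  rw [card_eq_sum_card_fiberwise (f := addOrderOf) fun x _ =>
    Nat.mem_divisors.2 ⟨addOrderOf_dvd_card, Fintype.card_ne_zero⟩]
  refine sum_congr rfl fun d hd => ?_
  rw [filter_filter]
  split_ifs with hP
  · rw [← IsAddCyclic.card_addOrderOf_eq_totient (Nat.dvd_of_mem_divisors hd)]
    congr 1; ext x; simp only [mem_filter, mem_univ, true_and, and_iff_right_iff_imp]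
    exact fun hx => hx ▸ hP
  · rw [card_eq_zero, filter_eq_empty_iff]
    exact fun x _ ⟨hx, hxd⟩ => hP (hxd ▸ hx)

lemma ZMod.orderOf_natCast_dvd_totient {a d : ℕ} (h : a.Coprime d) :
    orderOf (a : ZMod d) ∣ d.totient := by
  rw [← ZMod.coe_unitOfCoprime a h, orderOf_units]
  exact orderOf_dvd_of_pow_eq_one (ZMod.pow_totient _)

lemma Nat.card_filter_dvd_range_of_dvd {m N : ℕ} (h : m ∣ N) :
    #{j ∈ range N | m ∣ j} = N / m := by
  rcases m.eq_zero_or_pos with rfl | hm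
  · simp [zero_dvd_iff.1 h]
  · simpa [Nat.count_eq_card_filter_range, Nat.modEq_zero_iff_dvd, Nat.mod_eq_zero_of_dvd h]
      using Nat.count_modEq_card N hm 0

lemma cyc_eq_sum_totient_div_orderOf {a n : ℕ} [NeZero n] (hco : a.Coprime n)
    {π : Perm (ZMod n)} (hπ : ∀ x, π x = a * x) :
    cyc π = ∑ d ∈ n.divisors, d.totient / orderOf (a : ZMod d) := by
  let N := Fintype.card (Perm (ZMod n))
  have : NeZero N := ⟨Fintype.card_ne_zero⟩
  have hpow (j : ℕ) (x : ZMod n) : (π ^ j) x = (a : ZMod n) ^ j * x := by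
    induction j generalizing x with
    | zero => simp
    | succ j ih => rw [pow_succ, Perm.mul_apply, ih, hπ, pow_succ, mul_assoc]
  have hord {d : ℕ} (hd : d ∈ n.divisors) :
      orderOf (a : ZMod d) ∣ d.totient ∧ orderOf (a : ZMod d) ∣ N := by
    have hdn := Nat.dvd_of_mem_divisors hd
    have htot := ZMod.orderOf_natCast_dvd_totient (hco.coprime_dvd_right hdn)
    refine ⟨htot, htot.trans ?_⟩
    rw [show N = n.factorial by simp [N, Fintype.card_perm]]
    exact Nat.dvd_factorial (Nat.totient_pos.2 (Nat.pos_of_mem_divisors hd))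
      ((Nat.totient_le d).trans (Nat.divisor_le hd))
  refine Nat.eq_of_mul_eq_mul_right (NeZero.pos N) ?_
  calc cyc π * N
      = ∑ j ∈ range N, ∑ d ∈ n.divisors, if orderOf (a : ZMod d) ∣ j then d.totient else 0 := by
        rw [cyc_mul_eq_sum_card_fixedPoints_pow pow_card_eq_one]
        simp_rw [hpow, natCast_pow_mul_eq_self_iff]
        refine sum_congr rfl fun j _ => ?_
        rw [IsAddCyclic.card_filter_addOrderOf fun d => orderOf (a : ZMod d) ∣ j, ZMod.card]
    _ = ∑ d ∈ n.divisors, d.totient * (N / orderOf (a : ZMod d)) := by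
        rw [sum_comm]
        refine sum_congr rfl fun d hd => ?_
        rw [← sum_filter, sum_const, Nat.card_filter_dvd_range_of_dvd (hord hd).2, smul_eq_mul,
          mul_comm]
    _ = (∑ d ∈ n.divisors, d.totient / orderOf (a : ZMod d)) * N := by
        rw [sum_mul]
        refine sum_congr rfl fun d hd => ?_
        rw [Nat.div_mul_right_comm (hord hd).1, Nat.mul_div_assoc _ (hord hd).2]

lemma tCoset_eq_tPerm_of_forall_cyc_le {n : ℕ} {π : Perm (ZMod n)}
    (h : ∀ k, cyc (π * Equiv.addRight k) ≤ cyc π) : tCoset π = tPerm π := by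
  unfold tCoset
  refine le_antisymm (Nat.sInf_le ⟨0, ?_⟩) (le_csInf ⟨_, 0, rfl⟩ fun _ ⟨k, hk⟩ => ?_)
  · rw [Equiv.addRight_zero, mul_one]
  · exact hk ▸ Nat.sub_le_sub_left (h k) n

theorem tCoset_affine_general (a n : ℕ) (hn : 0 < n) (hco : Nat.Coprime a n)
    (π : Equiv.Perm (ZMod n)) (hπ : ∀ x : ZMod n, π x = (a : ZMod n) * x) :
    tCoset π = n - ∑ d ∈ n.divisors, d.totient / orderOf ((a : ZMod d)) := by
  have : NeZero n := ⟨hn.ne'⟩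
  have hle (k : ZMod n) : cyc (π * Equiv.addRight k) ≤ cyc π :=
    cyc_le_of_sub_eq fun x y => by simp [hπ, mul_add, mul_sub]
  rw [tCoset_eq_tPerm_of_forall_cyc_le hle, tPerm, cyc_eq_sum_totient_div_orderOf hco hπ]

theorem tCoset_affine (a n : ℕ) (hn : 0 < n) (ha : 0 < a) (hco : Nat.Coprime a n)
    (π : Equiv.Perm (ZMod n)) (hπ : ∀ x : ZMod n, π x = (a : ZMod n) * x) :
    tCoset π = n - ∑ d ∈ n.divisors, d.totient / orderOf ((a : ZMod d)) :=
  tCoset_affine_general a n hn hco π hπ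
end

section
/- Let p, q ≥ 3 be prime numbers and let e_x ∈ ℤ for each x ∈ ℤ_p, with e := Σ_{x ∈ ℤ_p} e_x. Then t(pq) ≥ pq − max over x ∈ ℤ_p of ( 2 + gcd(q−1, e_x) + gcd(q−1, e − e_x) ), where gcd(q−1, m) for an integer m denotes the (nonnegative) greatest common divisor of q−1 and m. -/
/-!
For `p ≠ q` identify `ℤ_pq` with `ℤ_p × ℤ_q` and take `π (a, b) = (h * a, ζ ^ e_a * b)`, where `h`
and `ζ` generate the unit groups. Every `π ∘ c^k` is again a skew product of affine maps, over the
affine map `a ↦ h * (a + k₁)` of `ℤ_p`, which has a fixed point `a*` and one further cycle of length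
`p - 1`. The fibre over `a*` is invariant, and the first return map to the fibre over `a* + 1` is
affine with multiplier `ζ ^ (e - e_x)`, where `x = a* + k₁`. An affine map `b ↦ ζ ^ s * b + c` of
`ℤ_q` has at most `1 + gcd (q - 1, s)` cycles: away from the case `ζ ^ s = 1` it is conjugate to
multiplication by `ζ ^ s`, whose nonzero cycles are the cosets of `⟨ζ ^ s⟩`.

For `p = q` take multiplication by a generator `h` of `(ℤ/p²)ˣ`. Composed with any shift it is
conjugate to this multiplication again (as `1 - h` is a unit), whose cycles are `{0}`, the units and
`p` times the units, so `t([π]) ≥ p² - 3`.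
-/

open Equiv Finset

section Cycles

variable {α β : Type*}

theorem cyc_eq_card_quotient (σ : Perm α) :
    cyc σ = Nat.card (Quotient (Perm.SameCycle.setoid σ)) := rfl

theorem cyc_le_card_of_forall_exists_sameCycle {σ : Perm α} (R : Finset α)
    (hR : ∀ x, ∃ r ∈ R, σ.SameCycle r x) : cyc σ ≤ #R := by
  rw [cyc_eq_card_quotient, ← Nat.card_eq_finsetCard]
  refine Nat.card_le_card_of_surjective (fun r : R => Quotient.mk _ (r : α)) ?_
  rintro ⟨x⟩
  obtain ⟨r, hr, hrx⟩ := hR x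
  exact ⟨⟨r, hr⟩, Quotient.sound hrx⟩

theorem exists_finset_card_le_cyc_forall_exists_sameCycle [Finite α] (σ : Perm α) :
    ∃ R : Finset α, #R ≤ cyc σ ∧ ∀ x, ∃ r ∈ R, σ.SameCycle r x := by
  classical
  have := Fintype.ofFinite α
  refine ⟨univ.image (fun c : Quotient (Perm.SameCycle.setoid σ) => c.out), ?_, fun x => ?_⟩
  · rw [cyc_eq_card_quotient, Nat.card_eq_fintype_card]
    exact card_image_le
  · exact ⟨_, mem_image_of_mem _ (mem_univ ⟦x⟧), Quotient.mk_out (s := Perm.SameCycle.setoid σ) x⟩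

theorem Equiv.Perm.sameCycle_permCongr_apply (e : α ≃ β) (σ : Perm α) {x y : α} :
    (e.permCongr σ).SameCycle (e x) (e y) ↔ σ.SameCycle x y := by
  have hpow (i : ℤ) : e.permCongr σ ^ i = e.permCongr (σ ^ i) := by
    simpa only [permCongrHom_coe] using (map_zpow e.permCongrHom σ i).symm
  simp [Perm.SameCycle, hpow]

theorem cyc_permCongr (e : α ≃ β) (σ : Perm α) : cyc (e.permCongr σ) = cyc σ :=
  (Nat.card_congr (Quotient.congr e fun _ _ => (Perm.sameCycle_permCongr_apply e σ).symm)).symm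

end Cycles

section Fibred

variable {α β : Type*} [Finite α] [Finite β] {σ : Perm (α × β)} {b : Perm α}

theorem exists_sameCycle_of_forall_pow_apply (hσ : ∀ z, (σ z).1 = b z.1) {a : α} {m : ℕ}
    {τ : Perm β} (hτ : ∀ y, (σ ^ m) (a, y) = (a, τ y)) {R : Finset β}
    (hR : ∀ y, ∃ r ∈ R, τ.SameCycle r y) {z : α × β} (hz : b.SameCycle z.1 a) :
    ∃ r ∈ R, σ.SameCycle (a, r) z := by
  obtain ⟨i, hi⟩ := hz.exists_nat_pow_eq
  have hfst : ((σ ^ i) z).1 = a := by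
    rw [← hi, Perm.coe_pow, Perm.coe_pow]
    exact Function.Semiconj.iterate_right (f := Prod.fst) hσ i z
  obtain ⟨r, hr, hrz⟩ := hR ((σ ^ i) z).2
  obtain ⟨j, hj⟩ := hrz.exists_nat_pow_eq
  have hlift : ((σ ^ m) ^ j) (a, r) = (a, (τ ^ j) r) := by
    simpa only [Perm.coe_pow] using
      (Function.Semiconj.iterate_right (f := fun y => (a, y)) (gb := ⇑(σ ^ m))
        (fun y => (hτ y).symm) j r).symm
  refine ⟨r, hr, ?_⟩
  rw [← Perm.sameCycle_pow_right (n := i)]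
  refine Perm.SameCycle.of_pow (n := m) ⟨j, ?_⟩
  rw [zpow_natCast, hlift, hj, ← hfst]

theorem cyc_le_add_of_forall_sameCycle_or (hσ : ∀ z, (σ z).1 = b z.1) {a₁ a₂ : α}
    (hb : ∀ a, b.SameCycle a a₁ ∨ b.SameCycle a a₂) {m₁ m₂ : ℕ} {τ₁ τ₂ : Perm β}
    (hτ₁ : ∀ y, (σ ^ m₁) (a₁, y) = (a₁, τ₁ y)) (hτ₂ : ∀ y, (σ ^ m₂) (a₂, y) = (a₂, τ₂ y)) :
    cyc σ ≤ cyc τ₁ + cyc τ₂ := by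
  classical
  obtain ⟨R₁, hR₁, hcov₁⟩ := exists_finset_card_le_cyc_forall_exists_sameCycle τ₁
  obtain ⟨R₂, hR₂, hcov₂⟩ := exists_finset_card_le_cyc_forall_exists_sameCycle τ₂
  calc cyc σ ≤ #(R₁.image (a₁, ·) ∪ R₂.image (a₂, ·)) := by
        refine cyc_le_card_of_forall_exists_sameCycle _ fun z => ?_
        rcases hb z.1 with hz | hz
        · obtain ⟨r, hr, hrz⟩ := exists_sameCycle_of_forall_pow_apply hσ hτ₁ hcov₁ hz
          exact ⟨_, mem_union_left _ (mem_image_of_mem _ hr), hrz⟩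
        · obtain ⟨r, hr, hrz⟩ := exists_sameCycle_of_forall_pow_apply hσ hτ₂ hcov₂ hz
          exact ⟨_, mem_union_right _ (mem_image_of_mem _ hr), hrz⟩
    _ ≤ #R₁ + #R₂ := (card_union_le _ _).trans (add_le_add card_image_le card_image_le)
    _ ≤ cyc τ₁ + cyc τ₂ := add_le_add hR₁ hR₂

end Fibred

theorem Finset.prod_zpow_eq_zpow_sum {ι G : Type*} [CommGroup G] (t : Finset ι) (f : ι → ℤ)
    (g : G) : ∏ i ∈ t, g ^ f i = g ^ ∑ i ∈ t, f i := by
  induction t using Finset.cons_induction with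
  | empty => simp
  | cons i t _ ih => rw [prod_cons, sum_cons, ih, zpow_add]

theorem IsCyclic.sum_range_orderOf_pow {G M : Type*} [Group G] [Fintype G] [AddCommMonoid M]
    {g : G} (hg : ∀ x, x ∈ Subgroup.zpowers g) (f : G → M) :
    ∑ j ∈ range (orderOf g), f (g ^ j) = ∑ x, f x := by
  classical
  rw [← IsCyclic.image_range_orderOf hg, sum_image fun i hi j hj hij =>
    pow_injOn_Iio_orderOf (mem_range.1 hi) (mem_range.1 hj) hij]

theorem sum_units_add_eq_sum_sub {K M : Type*} [Field K] [Fintype K] [DecidableEq K]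
    [AddCommGroup M] (f : K → M) (x : K) : ∑ u : Kˣ, f (x + u) = ∑ a, f a - f x := by
  calc ∑ u : Kˣ, f (x + u) = ∑ a ∈ univ.erase 0, f (x + a) :=
        sum_bij' (fun u _ => (u : K)) (fun a ha => Units.mk0 a (ne_of_mem_erase ha))
          (by simp) (by simp) (by simp) (by simp) (by simp)
    _ = ∑ a, f a - f x := by
        rw [sum_erase_eq_sub (mem_univ 0), add_zero,
          Fintype.sum_equiv (Equiv.addLeft x) (fun a => f (x + a)) f fun _ => rfl]

theorem exists_lt_gcd_zpow_mul_pow_eq {G : Type*} [Group G] [Finite G] {g : G}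
    (hg : ∀ x, x ∈ Subgroup.zpowers g) (s : ℤ) (x : G) :
    ∃ j < Int.gcd (orderOf g) s, ∃ i : ℤ, (g ^ s) ^ i * g ^ j = x := by
  set d := Int.gcd (orderOf g) s
  have hd : 0 < d := Int.gcd_pos_of_ne_zero_left _ (by exact_mod_cast (orderOf_pos g).ne')
  obtain ⟨m, rfl⟩ : ∃ m : ℕ, g ^ m = x := mem_powers_iff_mem_zpowers.2 (hg x)
  refine ⟨m % d, Nat.mod_lt m hd, Int.gcdB (orderOf g) s * (m / d : ℕ), ?_⟩
  rw [← zpow_mul, ← zpow_natCast g (m % d), ← zpow_add, ← zpow_natCast g m,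
    zpow_eq_zpow_iff_modEq, Int.modEq_iff_dvd]
  -- Bézout: `g ^ d` is a power of `g ^ s`, as `g ^ orderOf g = 1`.
  have hbezout : (d : ℤ) = orderOf g * Int.gcdA (orderOf g) s + s * Int.gcdB (orderOf g) s :=
    Int.gcd_eq_gcd_ab _ _
  have hdiv : ((m % d : ℕ) : ℤ) + d * (m / d : ℕ) = m := by exact_mod_cast Nat.mod_add_div m d
  exact ⟨Int.gcdA (orderOf g) s * (m / d : ℕ),
    by linear_combination ((m / d : ℕ) : ℤ) * hbezout - hdiv⟩

theorem MulAction.toPerm_zpow_apply {G α : Type*} [Group G] [MulAction G α] (g : G) (i : ℤ)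
    (x : α) : (MulAction.toPerm g ^ i) x = (g ^ i) • x := by
  rw [← MulAction.toPermHom_apply, ← map_zpow]
  rfl

section Affine

variable {R : Type*} [CommRing R]

def affinePerm (μ : Rˣ) (c : R) : Perm R := Equiv.addRight c * MulAction.toPerm μ

@[simp]
theorem affinePerm_apply (μ : Rˣ) (c x : R) : affinePerm μ c x = μ * x + c := rfl

theorem exists_affinePerm_eq_permCongr {μ : Rˣ} (hμ : IsUnit (1 - (μ : R))) (c : R) :
    ∃ x₀ : R, affinePerm μ c = (Equiv.addRight x₀).permCongr (MulAction.toPerm μ) := by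
  obtain ⟨u, hu⟩ := hμ
  refine ⟨↑u⁻¹ * c, Equiv.ext fun x => ?_⟩
  simp only [affinePerm_apply, permCongr_apply, coe_addRight, addRight_symm, MulAction.toPerm_apply,
    Units.smul_def]
  linear_combination (↑u⁻¹ * c) * hu - c * u.mul_inv

theorem cyc_affinePerm_of_isUnit {μ : Rˣ} (hμ : IsUnit (1 - (μ : R))) (c : R) :
    cyc (affinePerm μ c) = cyc (MulAction.toPerm μ : Perm R) := by
  obtain ⟨x₀, hx₀⟩ := exists_affinePerm_eq_permCongr hμ c
  rw [hx₀, cyc_permCongr]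

theorem exists_affinePerm_pow_apply_add {μ : Rˣ} (hμ : IsUnit (1 - (μ : R))) (c : R) :
    ∃ x₀ : R, ∀ (j : ℕ) (w : R), (affinePerm μ c ^ j) (x₀ + w) = x₀ + ↑(μ ^ j) * w := by
  obtain ⟨x₀, hx₀⟩ := exists_affinePerm_eq_permCongr hμ c
  refine ⟨x₀, fun j w => ?_⟩
  have hpow := MulAction.toPerm_zpow_apply μ j w
  rw [zpow_natCast, zpow_natCast, Units.smul_def, smul_eq_mul] at hpow
  rw [hx₀, ← permCongrHom_coe, ← map_pow, permCongrHom_coe, permCongr_apply]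
  simp [hpow, add_comm]

theorem prodShear_affinePerm_pow_apply {α : Type*} (b : Perm α) (μ : α → Rˣ) (c : α → R)
    (m : ℕ) (a : α) :
    ∃ C : R, ∀ y, ((prodShear b fun a => affinePerm (μ a) (c a)) ^ m) (a, y) =
      ((b ^ m) a, affinePerm (∏ j ∈ range m, μ ((b ^ j) a)) C y) := by
  induction m with
  | zero => exact ⟨0, fun y => by simp⟩
  | succ m ih =>
    obtain ⟨C, hC⟩ := ih
    refine ⟨μ ((b ^ m) a) * C + c ((b ^ m) a), fun y => ?_⟩
    rw [pow_succ', Perm.mul_apply, hC, prod_range_succ, pow_succ', Perm.mul_apply]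
    simp only [prodShear_apply, affinePerm_apply, Units.val_mul]
    exact Prod.ext rfl (by ring)

end Affine

section FiniteField

variable {F : Type*} [Field F] [Fintype F] {ζ : Fˣ}

theorem cyc_toPerm_zpow_le (hζ : ∀ u, u ∈ Subgroup.zpowers ζ) (s : ℤ) :
    cyc (MulAction.toPerm (ζ ^ s) : Perm F) ≤ 1 + Int.gcd (orderOf ζ) s := by
  classical
  set d := Int.gcd (orderOf ζ) s
  calc cyc (MulAction.toPerm (ζ ^ s) : Perm F)
      ≤ #(insert 0 ((range d).image fun j => ((ζ ^ j : Fˣ) : F))) := by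
        refine cyc_le_card_of_forall_exists_sameCycle _ fun x => ?_
        by_cases hx : x = 0
        · exact ⟨0, mem_insert_self _ _, hx ▸ Perm.SameCycle.refl _ _⟩
        obtain ⟨j, hj, i, hij⟩ := exists_lt_gcd_zpow_mul_pow_eq hζ s (Units.mk0 x hx)
        refine ⟨_, mem_insert_of_mem (mem_image_of_mem _ (mem_range.2 hj)), i, ?_⟩
        rw [MulAction.toPerm_zpow_apply, Units.smul_def, smul_eq_mul, ← Units.val_mul, hij,
          Units.val_mk0]
    _ ≤ #((range d).image fun j => ((ζ ^ j : Fˣ) : F)) + 1 := card_insert_le _ _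
    _ ≤ 1 + d := by
        have := card_image_le (s := range d) (f := fun j => ((ζ ^ j : Fˣ) : F))
        rw [card_range] at this
        omega

theorem cyc_affinePerm_zpow_le (hζ : ∀ u, u ∈ Subgroup.zpowers ζ) (s : ℤ) (c : F) :
    cyc (affinePerm (ζ ^ s) c) ≤ 1 + Int.gcd (orderOf ζ) s := by
  classical
  by_cases hs : ζ ^ s = 1
  · have hgcd : Int.gcd (orderOf ζ) s = orderOf ζ :=
      mod_cast Int.gcd_eq_left (Int.natCast_nonneg _) (orderOf_dvd_iff_zpow_eq_one.2 hs)
    have hcard : Fintype.card F = 1 + orderOf ζ := by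
      rw [orderOf_eq_card_of_forall_mem_zpowers hζ, Nat.card_eq_fintype_card,
        Fintype.card_units]
      have := Fintype.card_pos (α := F)
      omega
    calc cyc (affinePerm (ζ ^ s) c) ≤ #(univ : Finset F) :=
          cyc_le_card_of_forall_exists_sameCycle _ fun x => ⟨x, mem_univ x, .refl _ _⟩
      _ = 1 + Int.gcd (orderOf ζ) s := by rw [card_univ, hcard, hgcd]
  · rw [cyc_affinePerm_of_isUnit (sub_ne_zero.2 fun h => hs (Units.ext h.symm)).isUnit]
    exact cyc_toPerm_zpow_le hζ s

theorem cyc_prodShear_affinePerm_le {K : Type*} [Field K] [Fintype K] [DecidableEq K] {h : Kˣ}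
    (hh : ∀ u, u ∈ Subgroup.zpowers h) (hh1 : h ≠ 1) (hζ : ∀ u, u ∈ Subgroup.zpowers ζ) (c₀ : K)
    (s : K → ℤ) (c : K → F) :
    ∃ x : K, cyc (prodShear (affinePerm h c₀) fun a => affinePerm (ζ ^ s a) (c a)) ≤
      2 + Int.gcd (orderOf ζ) (s x) + Int.gcd (orderOf ζ) (∑ a, s a - s x) := by
  obtain ⟨x, hbx⟩ := exists_affinePerm_pow_apply_add
    (sub_ne_zero.2 fun h1 => hh1 (Units.ext h1.symm)).isUnit c₀
  set b := affinePerm h c₀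
  set σ : Perm (K × F) := prodShear b fun a => affinePerm (ζ ^ s a) (c a)
  have hfix : b x = x := by simpa only [pow_one, add_zero, mul_zero] using hbx 1 0
  have hbase (a : K) : b.SameCycle a x ∨ b.SameCycle a (x + 1) := by
    by_cases ha : a = x
    · exact .inl (ha ▸ .refl _ _)
    obtain ⟨j, hj⟩ := mem_powers_iff_mem_zpowers.2 (hh (Units.mk0 (a - x) (sub_ne_zero.2 ha)))
    dsimp only at hj
    refine .inr (Perm.SameCycle.symm ⟨j, ?_⟩)
    rw [zpow_natCast, hbx, mul_one, hj, Units.val_mk0, add_sub_cancel]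
  have hfibre (y : F) : (σ ^ 1) (x, y) = (x, affinePerm (ζ ^ s x) (c x) y) := by
    simp [σ, prodShear_apply, hfix]
  obtain ⟨C, hC⟩ := prodShear_affinePerm_pow_apply b (fun a => ζ ^ s a) c (orderOf h) (x + 1)
  have hreturn (y : F) :
      (σ ^ orderOf h) (x + 1, y) = (x + 1, affinePerm (ζ ^ (∑ a, s a - s x)) C y) := by
    have hexp : ∑ j ∈ range (orderOf h), s ((b ^ j) (x + 1)) = ∑ a, s a - s x := by
      simp only [hbx, mul_one]
      rw [IsCyclic.sum_range_orderOf_pow hh (fun u => s (x + u)), sum_units_add_eq_sum_sub]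
    rw [hC, hbx, pow_orderOf_eq_one, Units.val_one, mul_one, prod_zpow_eq_zpow_sum, hexp]
  refine ⟨x, ?_⟩
  calc cyc σ ≤ cyc (affinePerm (ζ ^ s x) (c x)) + cyc (affinePerm (ζ ^ (∑ a, s a - s x)) C) :=
        cyc_le_add_of_forall_sameCycle_or (fun _ => rfl) hbase hfibre hreturn
    _ ≤ (1 + Int.gcd (orderOf ζ) (s x)) + (1 + Int.gcd (orderOf ζ) (∑ a, s a - s x)) :=
        add_le_add (cyc_affinePerm_zpow_le hζ _ _) (cyc_affinePerm_zpow_le hζ _ _)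
    _ = 2 + Int.gcd (orderOf ζ) (s x) + Int.gcd (orderOf ζ) (∑ a, s a - s x) := by ring

end FiniteField

theorem exists_perm_cyc_mul_addRight_le_of_ne {p q : ℕ} [Fact p.Prime] [Fact q.Prime]
    (hp3 : 3 ≤ p) (hpq : p ≠ q) (e : ZMod p → ℤ) :
    ∃ π : Perm (ZMod (p * q)), ∀ k, ∃ x : ZMod p, cyc (π * Equiv.addRight k) ≤
      2 + Int.gcd ((q : ℤ) - 1) (e x) + Int.gcd ((q : ℤ) - 1) ((∑ y, e y) - e x) := by
  have hq := (Fact.out : q.Prime)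
  let E := ZMod.chineseRemainder ((Nat.coprime_primes Fact.out hq).2 hpq)
  obtain ⟨h, hh⟩ := IsCyclic.exists_generator (α := (ZMod p)ˣ)
  obtain ⟨ζ, hζ⟩ := IsCyclic.exists_generator (α := (ZMod q)ˣ)
  have hordh : orderOf h = p - 1 := by
    rw [orderOf_eq_card_of_forall_mem_zpowers hh, Nat.card_eq_fintype_card, ZMod.card_units]
  have hordζ : (orderOf ζ : ℤ) = q - 1 := by
    rw [orderOf_eq_card_of_forall_mem_zpowers hζ, Nat.card_eq_fintype_card, ZMod.card_units,
      Nat.cast_sub hq.one_le, Nat.cast_one]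
  have hh1 : h ≠ 1 := fun h1 => by rw [h1, orderOf_one] at hordh; omega
  let π₀ : Perm (ZMod p × ZMod q) :=
    prodShear (MulAction.toPerm h) fun a => MulAction.toPerm (ζ ^ e a)
  refine ⟨E.symm.toEquiv.permCongr π₀, fun k => ?_⟩
  have hk : E.symm.toEquiv.permCongr π₀ * Equiv.addRight k = E.symm.toEquiv.permCongr
      (prodShear (affinePerm h (h * (E k).1)) fun a =>
        affinePerm (ζ ^ e (a + (E k).1)) (↑(ζ ^ e (a + (E k).1)) * (E k).2)) := by
    refine Equiv.ext fun z => congrArg E.symm ?_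
    simp [π₀, prodShear_apply, Units.smul_def]
  obtain ⟨x, hx⟩ := cyc_prodShear_affinePerm_le hh hh1 hζ (h * (E k).1)
    (fun a => e (a + (E k).1)) fun a => ↑(ζ ^ e (a + (E k).1)) * (E k).2
  have hsum : ∑ a, e (a + (E k).1) = ∑ y, e y :=
    Fintype.sum_equiv (Equiv.addRight (E k).1) _ _ fun _ => rfl
  rw [hsum] at hx
  refine ⟨x + (E k).1, ?_⟩
  rwa [hk, cyc_permCongr, ← hordζ]

section PrimeSquare

variable {p : ℕ} [hp : Fact p.Prime]

theorem ZMod.exists_unit_mul_eq_of_not_isUnit {x : ZMod (p ^ 2)} (hx0 : x ≠ 0)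
    (hx : ¬IsUnit x) : ∃ u : (ZMod (p ^ 2))ˣ, x = (u : ZMod (p ^ 2)) * (p : ZMod (p ^ 2)) := by
  have hval : (x.val : ZMod (p ^ 2)) = x := ZMod.natCast_zmod_val x
  obtain ⟨y, hy⟩ : p ∣ x.val := by
    by_contra hnd
    rw [← hval, ZMod.isUnit_iff_coprime] at hx
    exact hx (((Nat.Prime.coprime_iff_not_dvd hp.out).2 hnd).symm.pow_right 2)
  have hy0 : 0 < y := Nat.pos_of_ne_zero fun h0 => hx0 (by rw [← hval, hy, h0, mul_zero,
    Nat.cast_zero])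
  have hyp : y < p := by
    have := ZMod.val_lt x
    rw [hy, sq] at this
    exact Nat.lt_of_mul_lt_mul_left this
  refine ⟨ZMod.unitOfCoprime y ((Nat.coprime_of_lt_prime hy0.ne' hyp hp.out).symm.pow_right 2), ?_⟩
  rw [ZMod.coe_unitOfCoprime, ← hval, hy, Nat.cast_mul, mul_comm]

theorem cyc_toPerm_le_three {h : (ZMod (p ^ 2))ˣ} (hh : ∀ u, u ∈ Subgroup.zpowers h) :
    cyc (MulAction.toPerm h : Perm (ZMod (p ^ 2))) ≤ 3 := by
  classical
  have hsame (u : (ZMod (p ^ 2))ˣ) (y : ZMod (p ^ 2)) :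
      (MulAction.toPerm h : Perm (ZMod (p ^ 2))).SameCycle y ((u : ZMod (p ^ 2)) * y) := by
    obtain ⟨i, rfl⟩ := Subgroup.mem_zpowers_iff.1 (hh u)
    exact ⟨i, by rw [MulAction.toPerm_zpow_apply, Units.smul_def, smul_eq_mul]⟩
  refine (cyc_le_card_of_forall_exists_sameCycle {0, 1, (p : ZMod (p ^ 2))} fun x => ?_).trans
    card_le_three
  by_cases hx0 : x = 0
  · exact ⟨0, by simp, hx0 ▸ .refl _ _⟩
  by_cases hx : IsUnit x
  · obtain ⟨u, rfl⟩ := hx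
    exact ⟨1, by simp, by simpa using hsame u 1⟩
  · obtain ⟨u, rfl⟩ := ZMod.exists_unit_mul_eq_of_not_isUnit hx0 hx
    exact ⟨p, by simp, hsame u p⟩

theorem isUnit_one_sub_of_forall_mem_zpowers (hp2 : p ≠ 2) {h : (ZMod (p ^ 2))ˣ}
    (hh : ∀ u, u ∈ Subgroup.zpowers h) : IsUnit (1 - (h : ZMod (p ^ 2))) := by
  have hdvd : p ∣ p ^ 2 := dvd_pow_self p two_ne_zero
  by_contra hu
  have hφ : ZMod.castHom hdvd (ZMod p) (1 - h) = 0 := by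
    by_cases h0 : 1 - (h : ZMod (p ^ 2)) = 0
    · rw [h0, map_zero]
    obtain ⟨u, hu'⟩ := ZMod.exists_unit_mul_eq_of_not_isUnit h0 hu
    rw [hu', map_mul, map_natCast, ZMod.natCast_self, mul_zero]
  have hmap : ZMod.unitsMap hdvd h = 1 := by
    ext
    rw [ZMod.unitsMap_def, Units.coe_map, MonoidHom.coe_coe, Units.val_one]
    rw [map_sub, map_one, sub_eq_zero] at hφ
    exact hφ.symm
  obtain ⟨w, hw⟩ := ZMod.unitsMap_surjective hdvd (-1)
  obtain ⟨i, rfl⟩ := Subgroup.mem_zpowers_iff.1 (hh w)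
  have : Fact (2 < p) := ⟨lt_of_le_of_ne hp.out.two_le (Ne.symm hp2)⟩
  have hw' := congrArg Units.val hw
  rw [map_zpow, hmap, one_zpow, Units.val_one, Units.val_neg, Units.val_one] at hw'
  exact ZMod.neg_one_ne_one hw'.symm

theorem exists_perm_cyc_mul_addRight_le_three (hp2 : p ≠ 2) :
    ∃ π : Perm (ZMod (p ^ 2)), ∀ k, cyc (π * Equiv.addRight k) ≤ 3 := by
  have := ZMod.isCyclic_units_of_prime_pow p hp.out hp2 2
  obtain ⟨h, hh⟩ := IsCyclic.exists_generator (α := (ZMod (p ^ 2))ˣ)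
  refine ⟨MulAction.toPerm h, fun k => ?_⟩
  have hk : MulAction.toPerm h * Equiv.addRight k = affinePerm h (h * k) := by
    ext x
    simp [Units.smul_def]
  rw [hk, cyc_affinePerm_of_isUnit (isUnit_one_sub_of_forall_mem_zpowers hp2 hh)]
  exact cyc_toPerm_le_three hh

end PrimeSquare

theorem sub_le_tCirc_of_forall_cyc_mul_addRight_le {n B : ℕ} (π : Perm (ZMod n))
    (hπ : ∀ k, cyc (π * Equiv.addRight k) ≤ B) : n - B ≤ tCirc n := by
  have hcoset : n - B ≤ tCoset π := by
    refine le_csInf ⟨_, 0, rfl⟩ ?_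
    rintro m ⟨k, rfl⟩
    exact Nat.sub_le_sub_left (hπ k) n
  refine hcoset.trans (le_csSup ⟨n, ?_⟩ ⟨π, rfl⟩)
  rintro m ⟨π', rfl⟩
  exact le_trans (Nat.sInf_le ⟨0, rfl⟩) (Nat.sub_le n (cyc (π' * Equiv.addRight 0)))

theorem tCirc_pq_ge_sub_max_general (p q : ℕ) [Fact p.Prime] [Fact q.Prime]
    (hp3 : 3 ≤ p) (e : ZMod p → ℤ) :
    p * q -
        sSup { m : ℕ | ∃ x : ZMod p,
          m = 2 + Int.gcd ((q : ℤ) - 1) (e x) +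
              Int.gcd ((q : ℤ) - 1) ((∑ y : ZMod p, e y) - e x) }
      ≤ tCirc (p * q) := by
  set f : ZMod p → ℕ := fun x =>
    2 + Int.gcd ((q : ℤ) - 1) (e x) + Int.gcd ((q : ℤ) - 1) ((∑ y : ZMod p, e y) - e x) with hf
  have hbdd : BddAbove { m | ∃ x, m = f x } :=
    (Set.finite_range f).bddAbove.mono (by rintro _ ⟨y, rfl⟩; exact ⟨y, rfl⟩)
  have hf_le (x : ZMod p) : f x ≤ sSup { m | ∃ x, m = f x } := le_csSup hbdd ⟨x, rfl⟩
  obtain ⟨π, hπ⟩ :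
      ∃ π : Perm (ZMod (p * q)), ∀ k, cyc (π * Equiv.addRight k) ≤ sSup { m | ∃ x, m = f x } := by
    rcases eq_or_ne p q with rfl | hpq
    · obtain ⟨π, hπ⟩ := exists_perm_cyc_mul_addRight_le_three (p := p) (by omega)
      have hf0 : 3 ≤ f 0 := by
        have := Int.gcd_pos_of_ne_zero_left (e 0) (show (p : ℤ) - 1 ≠ 0 by omega)
        simp only [hf]
        omega
      rw [← sq]
      exact ⟨π, fun k => (hπ k).trans (hf0.trans (hf_le 0))⟩
    · obtain ⟨π, hπ⟩ := exists_perm_cyc_mul_addRight_le_of_ne hp3 hpq e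
      refine ⟨π, fun k => ?_⟩
      obtain ⟨x, hx⟩ := hπ k
      exact hx.trans (hf_le x)
  exact sub_le_tCirc_of_forall_cyc_mul_addRight_le π hπ

theorem tCirc_pq_ge_sub_max (p q : ℕ) [Fact p.Prime] [Fact q.Prime]
    (hp3 : 3 ≤ p) (hq3 : 3 ≤ q) (e : ZMod p → ℤ) :
    p * q -
        sSup { m : ℕ | ∃ x : ZMod p,
          m = 2 + Int.gcd ((q : ℤ) - 1) (e x) +
              Int.gcd ((q : ℤ) - 1) ((∑ y : ZMod p, e y) - e x) }
      ≤ tCirc (p * q) :=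
  tCirc_pq_ge_sub_max_general p q hp3 e
end
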